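/- Let E and L be finite cyclic groups and let φ, ψ : L → E be surjective group homomorphisms with φ ≠ ψ. Set I_φ = {(φ(x), x) : x ∈ L} ≤ E × L, J_ψ = {(x, ψ(x)) : x ∈ L} ≤ L × E, and let Δ(E) = {(e, e) : e ∈ E} ≤ E × E. Then τ_{Δ(E)}^{I_φ, J_ψ} = 0. In particular, the matrix with rows and columns indexed by the surjective homomorphisms L → E and (φ, ψ)-entry τ_{Δ(E)}^{I_φ, J_ψ} is a diagonal matrix. -/

import Mathlib

open scoped Classical

namespace SubgroupCat

variable {R S T : Type*}

/-- The star product of subgroups `U ≤ R × S` and `V ≤ S × T`: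
`U * V = {(r, t) | ∃ s, (r, s) ∈ U ∧ (s, t) ∈ V}`. -/
def starProd [Group R] [Group S] [Group T] (U : Subgroup (R × S)) (V : Subgroup (S × T)) :
    Subgroup (R × T) where
  carrier := {rt | ∃ s : S, (rt.1, s) ∈ U ∧ (s, rt.2) ∈ V}
  one_mem' := ⟨1, one_mem U, one_mem V⟩
  mul_mem' := by
    rintro a b ⟨s, hU, hV⟩ ⟨s', hU', hV'⟩
    exact ⟨s * s', mul_mem hU hU', mul_mem hV hV'⟩
  inv_mem' := by
    rintro a ⟨s, hU, hV⟩
    exact ⟨s⁻¹, inv_mem hU, inv_mem hV⟩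

@[simp] lemma mem_starProd [Group R] [Group S] [Group T] {U : Subgroup (R × S)}
    {V : Subgroup (S × T)} {p : R × T} :
    p ∈ starProd U V ↔ ∃ s : S, (p.1, s) ∈ U ∧ (s, p.2) ∈ V := Iff.rfl

/-- First projection `p₁(U) = {r | ∃ s, (r, s) ∈ U}`. -/
def p1 [Group R] [Group S] (U : Subgroup (R × S)) : Subgroup R :=
  U.map (MonoidHom.fst R S)

/-- Second projection `p₂(U) = {s | ∃ r, (r, s) ∈ U}`. -/
def p2 [Group R] [Group S] (U : Subgroup (R × S)) : Subgroup S :=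
  U.map (MonoidHom.snd R S)

/-- First kernel `k₁(U) = {r | (r, 1) ∈ U}`. -/
def k1 [Group R] [Group S] (U : Subgroup (R × S)) : Subgroup R :=
  U.comap (MonoidHom.inl R S)

/-- Second kernel `k₂(U) = {s | (1, s) ∈ U}`. -/
def k2 [Group R] [Group S] (U : Subgroup (R × S)) : Subgroup S :=
  U.comap (MonoidHom.inr R S)

/-- The Möbius function of a finite poset: `pmoeb u i` is `möb(u, i)`. -/
noncomputable def pmoeb {P : Type*} [PartialOrder P] [Finite P] (u i : P) : ℤ :=
  if u = i then 1
  else if u < i then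
    - ∑ v ∈ ({v : P | u < v ∧ v ≤ i}.toFinite.toFinset).attach, pmoeb v.1 i
  else 0
termination_by Nat.card {w : P // u ≤ w}
decreasing_by
  · have hv := v.2
    rw [Set.Finite.mem_toFinset] at hv
    have hlt : u < (v : P) := hv.1
    have hsub : {w : P | (v : P) ≤ w} ⊂ {w : P | u ≤ w} :=
      ⟨fun w hw => le_trans hlt.le hw,
       fun hcon => absurd (hcon (le_refl u)) (fun h => lt_irrefl _ (lt_of_lt_of_le hlt h))⟩
    rw [show {w : P // (v : P) ≤ w} = ↑{w : P | (v : P) ≤ w} from rfl,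
      show {w : P // u ≤ w} = ↑{w : P | u ≤ w} from rfl,
      Nat.card_coe_set_eq, Nat.card_coe_set_eq]
    exact Set.ncard_lt_ncard hsub (Set.toFinite _)

/-- `möb(U, I)` for subgroups of a finite group: the Möbius function of the
subgroup lattice. -/
noncomputable def moeb {G : Type*} [Group G] [Finite G] (U I : Subgroup G) : ℤ :=
  pmoeb U I

/-- `ℓ(A) = ℓ(|A|)` for a finite group `A`, where `ℓ : ℕ⁺ →* 𝕂ˣ`. -/
noncomputable def ellG {𝕂 : Type*} [Field 𝕂] (ℓ : ℕ+ →* 𝕂ˣ) (A : Type*) [Group A] [Finite A] :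
    𝕂 :=
  (ℓ ⟨Nat.card A, Nat.card_pos⟩ : 𝕂ˣ)

/-- The cocycle `σ(U, V) = ℓ(k₂(U) ∩ k₁(V))`. -/
noncomputable def sigmaC {𝕂 : Type*} [Field 𝕂] (ℓ : ℕ+ →* 𝕂ˣ)
    {F G H : Type*} [Group F] [Group G] [Group H] [Finite G]
    (U : Subgroup (F × G)) (V : Subgroup (G × H)) : 𝕂 :=
  ellG ℓ ↑(k2 U ⊓ k1 V)

/-- `τ_K^{I,J} = ∑ möb(U,I) · möb(V,J) · σ(U,V)`, the sum being over all pairs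
of subgroups `(U, V)` with `U ≤ I`, `V ≤ J` and `K ≤ U * V`. -/
noncomputable def tau {𝕂 : Type*} [Field 𝕂] (ℓ : ℕ+ →* 𝕂ˣ)
    {F G H : Type*} [Group F] [Group G] [Group H] [Finite F] [Finite G] [Finite H]
    (I : Subgroup (F × G)) (J : Subgroup (G × H)) (K : Subgroup (F × H)) : 𝕂 :=
  ∑ᶠ q ∈ {q : Subgroup (F × G) × Subgroup (G × H) |
      q.1 ≤ I ∧ q.2 ≤ J ∧ K ≤ starProd q.1 q.2},
    (moeb q.1 I : 𝕂) * (moeb q.2 J : 𝕂) * sigmaC ℓ q.1 q.2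

/-- The subgroup `{(f x, x) : x ∈ L}` of `E × L`, the graph of `f : L →* E`. -/
def graphL {E L : Type*} [Group E] [Group L] (f : L →* E) : Subgroup (E × L) :=
  (f.prod (MonoidHom.id L)).range

/-- The subgroup `{(x, f x) : x ∈ L}` of `L × E`, the graph of `f : L →* E`. -/
def graphR {E L : Type*} [Group E] [Group L] (f : L →* E) : Subgroup (L × E) :=
  ((MonoidHom.id L).prod f).range

/-- The diagonal subgroup `Δ(E) = {(e, e)} ≤ E × E`. -/
def diagSubgroup (E : Type*) [Group E] : Subgroup (E × E) :=
  graphL (MonoidHom.id E)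

/-- Two surjective homomorphisms between finite cyclic groups that hit every element
via a common preimage must coincide. -/
lemma hom_eq_of_common_preimages {E L : Type*} [Group E] [Group L] [Finite E] [Finite L]
    [IsCyclic E] [IsCyclic L] (φ ψ : L →* E) (hφ : Function.Surjective φ)
    (hψ : Function.Surjective ψ)
    (h : ∀ e : E, ∃ s : L, φ s = e ∧ ψ s = e) : φ = ψ := by
  obtain ⟨g, hg⟩ := IsCyclic.exists_generator (α := L)
  have hφg : ∀ e : E, e ∈ Subgroup.zpowers (φ g) := by
    intro e
    obtain ⟨x, rfl⟩ := hφ e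
    obtain ⟨k, rfl⟩ := hg x
    exact ⟨k, (map_zpow φ g k).symm⟩
  have hψg : ∀ e : E, e ∈ Subgroup.zpowers (ψ g) := by
    intro e
    obtain ⟨x, rfl⟩ := hψ e
    obtain ⟨k, rfl⟩ := hg x
    exact ⟨k, (map_zpow ψ g k).symm⟩
  have hordφ : orderOf (φ g) = Nat.card E := orderOf_eq_card_of_forall_mem_zpowers hφg
  have hordψ : orderOf (ψ g) = Nat.card E := orderOf_eq_card_of_forall_mem_zpowers hψg
  -- ker φ ⊆ ker ψ
  have hker : ∀ x : L, φ x = 1 → ψ x = 1 := by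
    intro x hx
    obtain ⟨k, rfl⟩ := hg x
    have h1 : (φ g) ^ k = 1 := by rw [← map_zpow]; simpa using hx
    have h2 : (orderOf (ψ g) : ℤ) ∣ k := by
      rw [hordψ, ← hordφ]; exact orderOf_dvd_iff_zpow_eq_one.mpr h1
    have h3 : (ψ g) ^ k = 1 := orderOf_dvd_iff_zpow_eq_one.mp h2
    simpa [map_zpow] using h3
  ext x
  obtain ⟨s, hs1, hs2⟩ := h (φ x)
  have hx1 : φ (x * s⁻¹) = 1 := by
    rw [map_mul, map_inv, hs1, mul_inv_eq_one]
  have hx2 : ψ (x * s⁻¹) = 1 := hker _ hx1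
  rw [map_mul, map_inv, mul_inv_eq_one] at hx2
  rw [hx2, hs2]

/-- If `φ ≠ ψ` there is no pair `(U, V)` with `U ≤ graphL φ`, `V ≤ graphR ψ` and
`Δ(E) ≤ U * V`, so `τ` vanishes. -/
lemma tau_graph_eq_zero {𝕂 : Type*} [Field 𝕂] [CharZero 𝕂] (ℓ : ℕ+ →* 𝕂ˣ)
    (E L : Type*) [Group E] [Group L] [Finite E] [Finite L] [IsCyclic E] [IsCyclic L]
    (φ ψ : L →* E) (hφ : Function.Surjective φ) (hψ : Function.Surjective ψ)
    (hne : φ ≠ ψ) :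
    tau ℓ (graphL φ) (graphR ψ) (diagSubgroup E) = 0 := by
  have hset : {q : Subgroup (E × L) × Subgroup (L × E) |
      q.1 ≤ graphL φ ∧ q.2 ≤ graphR ψ ∧ diagSubgroup E ≤ starProd q.1 q.2} = ∅ := by
    ext q
    simp only [Set.mem_setOf_eq, Set.mem_empty_iff_false, iff_false]
    rintro ⟨h1, h2, h3⟩
    refine hne (hom_eq_of_common_preimages φ ψ hφ hψ ?_)
    intro e
    have hd : (e, e) ∈ diagSubgroup E := ⟨e, rfl⟩
    obtain ⟨s, hU, hV⟩ := h3 hd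
    obtain ⟨x, hx⟩ := h1 hU
    obtain ⟨y, hy⟩ := h2 hV
    have hx1 : φ x = e := congrArg Prod.fst hx
    have hx2 : x = s := congrArg Prod.snd hx
    have hy1 : y = s := congrArg Prod.fst hy
    have hy2 : ψ y = e := congrArg Prod.snd hy
    exact ⟨s, by rw [← hx2, hx1], by rw [← hy1, hy2]⟩
  rw [tau, hset, finsum_mem_empty]

/-- For cyclic groups `E`, `L` and distinct surjections `φ, ψ : L → E`, the entry
`τ_{Δ(E)}^{◁(φ), ▷(ψ)}` vanishes; in particular the matrix `T_E^L` is diagonal. -/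
theorem tau_graph_cyclic_off_diag {𝕂 : Type*} [Field 𝕂] [CharZero 𝕂] (ℓ : ℕ+ →* 𝕂ˣ)
    (E L : Type*) [Group E] [Group L] [Finite E] [Finite L] [IsCyclic E] [IsCyclic L]
    (φ ψ : L →* E) (hφ : Function.Surjective φ) (hψ : Function.Surjective ψ)
    (hne : φ ≠ ψ) :
    tau ℓ (graphL φ) (graphR ψ) (diagSubgroup E) = 0 ∧
    (Matrix.of fun φ' ψ' : {f : L →* E // Function.Surjective f} =>
        tau ℓ (graphL φ'.1) (graphR ψ'.1) (diagSubgroup E)).IsDiag := by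
  refine ⟨tau_graph_eq_zero ℓ E L φ ψ hφ hψ hne, ?_⟩
  intro i j hij
  exact tau_graph_eq_zero ℓ E L i.1 j.1 i.2 j.2 (fun h => hij (Subtype.ext h))

end SubgroupCat
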